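/- Let C be a D×D real matrix with nonnegative entries. Then the spectral radius of C is strictly less than 1 if and only if all coefficients of the characteristic polynomial of C − I are positive, i.e., writing det(s·I − (C − I)) = s^D + c_{D−1} s^{D−1} + ⋯ + c_1 s + c_0, one has c_k > 0 for all 0 ≤ k ≤ D−1. -/

import Mathlib

/-- The spectral radius of a real square matrix is `< 1` iff every complex eigenvalue
(element of the spectrum of the matrix viewed over `ℂ`) has absolute value `< 1`. -/
def SpectralRadiusLtOne {D : ℕ} (C : Matrix (Fin D) (Fin D) ℝ) : Prop :=
  ∀ mu ∈ spectrum ℂ (C.map (algebraMap ℝ ℂ)), ‖mu‖ < 1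

/-!
The roots of `det (s • 1 - (C - 1))` are the numbers `μ - 1`, `μ` an eigenvalue of `C`.

If `ρ(C) < 1` they lie in the open left half-plane. By Gauss–Lucas so do the roots of every
derivative of the polynomial, and a real polynomial with positive leading coefficient and no
root in `[0, ∞)` is positive at `0`; applied to the `k`-th derivative this gives `c_k > 0`.

Conversely, positive coefficients give `det (t • 1 - C) > 0` for all `t ≥ 1`. For large `t`
the Neumann series shows `(t • 1 - C)⁻¹ ≥ 0`, and since `‖(t • 1 - C)⁻¹‖` is bounded on compact
intervals, this nonnegativity propagates down to `t = 1` in steps of uniform size. Now if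
`C v = μ v` with `‖μ‖ ≥ 1`, then `u = |v|` satisfies `u ≤ C u`, hence
`u = (1 - C)⁻¹ ((1 - C) u) ≤ 0`, so `v = 0`.
-/

open Polynomial

namespace Polynomial

theorem rootSet_derivative_subset_of_convex {P : ℂ[X]} {s : Set ℂ} (hs : Convex ℝ s)
    (hP : P.rootSet ℂ ⊆ s) : P.derivative.rootSet ℂ ⊆ s := by
  rcases le_or_gt P.degree 0 with h | h
  · simp [derivative_of_natDegree_zero (natDegree_eq_zero_iff_degree_le_zero.mpr h)]
  · exact (rootSet_derivative_subset_convexHull_rootSet h).trans (convexHull_min hP hs)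

theorem rootSet_iterate_derivative_subset_of_convex {P : ℂ[X]} {s : Set ℂ} (hs : Convex ℝ s)
    (hP : P.rootSet ℂ ⊆ s) (k : ℕ) : (derivative^[k] P).rootSet ℂ ⊆ s := by
  induction k with
  | zero => exact hP
  | succ k ih =>
    rw [Function.iterate_succ_apply']
    exact rootSet_derivative_subset_of_convex hs ih

theorem rootSet_map_algebraMap {R S : Type*} [CommRing R] [CommRing S] [IsDomain S] [Algebra R S]
    (p : R[X]) : (p.map (algebraMap R S)).rootSet S = p.rootSet S := by
  simp [rootSet, aroots_map]

section IterateDerivative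

variable {R : Type*} [Semiring R] [Module.IsTorsionFree ℕ R]

theorem natDegree_iterate_derivative_of_le (p : R[X]) {k : ℕ} (hk : k ≤ p.natDegree) :
    (derivative^[k] p).natDegree = p.natDegree - k := by
  rcases eq_or_ne p 0 with rfl | hp
  · simp
  refine le_antisymm (natDegree_iterate_derivative p k) (le_natDegree_of_ne_zero ?_)
  rw [coeff_iterate_derivative, Nat.sub_add_cancel hk]
  exact smul_ne_zero (Nat.descFactorial_pos.mpr hk).ne' (leadingCoeff_ne_zero.mpr hp)

theorem leadingCoeff_iterate_derivative_of_le (p : R[X]) {k : ℕ} (hk : k ≤ p.natDegree) :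
    (derivative^[k] p).leadingCoeff = p.natDegree.descFactorial k • p.leadingCoeff := by
  rw [leadingCoeff, natDegree_iterate_derivative_of_le p hk, coeff_iterate_derivative,
    Nat.sub_add_cancel hk, leadingCoeff]

end IterateDerivative

theorem eval_zero_pos_of_forall_nonneg_not_isRoot {q : ℝ[X]} (hq : 0 < q.leadingCoeff)
    (hroots : ∀ x : ℝ, 0 ≤ x → ¬q.IsRoot x) : 0 < q.eval 0 := by
  rcases le_or_gt q.degree 0 with hdeg | hdeg
  · rw [eq_C_of_degree_le_zero hdeg, leadingCoeff_C] at hq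
    rwa [eq_C_of_degree_le_zero hdeg, eval_C]
  obtain ⟨x, hx0, hx⟩ : ∃ x, 0 ≤ x ∧ 0 < q.eval x :=
    (((q.tendsto_atTop_of_leadingCoeff_nonneg hdeg hq.le).eventually
      (Filter.eventually_gt_atTop 0)).and (Filter.eventually_ge_atTop 0)).exists.imp
      fun _ h => ⟨h.2, h.1⟩
  by_contra! h0
  obtain ⟨y, hy, hqy⟩ := intermediate_value_Icc hx0 q.continuousOn ⟨h0, hx.le⟩
  exact hroots y hy.1 hqy

theorem coeff_pos_of_rootSet_subset_re_neg {p : ℝ[X]} (hp : 0 < p.leadingCoeff)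
    (hroots : p.rootSet ℂ ⊆ {z | z.re < 0}) {k : ℕ} (hk : k ≤ p.natDegree) : 0 < p.coeff k := by
  set q := derivative^[k] p
  have hq : 0 < q.leadingCoeff := by
    rw [leadingCoeff_iterate_derivative_of_le p hk]
    exact nsmul_pos hp (Nat.descFactorial_pos.mpr hk).ne'
  have hqroots : q.rootSet ℂ ⊆ {z | z.re < 0} := by
    rw [← rootSet_map_algebraMap, ← iterate_derivative_map]
    refine rootSet_iterate_derivative_subset_of_convex (convex_halfSpace_re_lt 0) ?_ k
    rwa [rootSet_map_algebraMap]
  have hq0 : 0 < q.eval 0 := by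
    refine eval_zero_pos_of_forall_nonneg_not_isRoot hq fun x hx hqx => ?_
    have : (x : ℂ) ∈ q.rootSet ℂ := by
      rw [mem_rootSet]
      exact ⟨leadingCoeff_ne_zero.mp hq.ne', by
        simpa [hqx.eq_zero] using aeval_algebraMap_apply_eq_algebraMap_eval (A := ℂ) x q⟩
    exact absurd (hqroots this) (by simpa using hx)
  rw [← coeff_zero_eq_eval_zero, coeff_iterate_derivative, zero_add, Nat.descFactorial_self] at hq0
  exact (nsmul_pos_iff (Nat.factorial_ne_zero k)).mp hq0

theorem eval_pos_of_coeff_pos {p : ℝ[X]} (hp : ∀ k ≤ p.natDegree, 0 < p.coeff k) {x : ℝ}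
    (hx : 0 ≤ x) : 0 < p.eval x := by
  rw [eval_eq_sum_range]
  refine Finset.sum_pos' (fun i hi => ?_) ⟨0, by simp, by simpa using hp 0 (Nat.zero_le _)⟩
  exact mul_nonneg (hp i (Nat.lt_succ_iff.mp (Finset.mem_range.mp hi))).le (pow_nonneg hx i)

end Polynomial

namespace Matrix

variable {n : Type*} [Fintype n]

theorem mul_apply_nonneg {A B : Matrix n n ℝ} (hA : ∀ i j, 0 ≤ A i j) (hB : ∀ i j, 0 ≤ B i j) :
    ∀ i j, 0 ≤ (A * B) i j := fun i j =>
  Finset.sum_nonneg fun k _ => mul_nonneg (hA i k) (hB k j)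

theorem norm_mul_norm_le_mulVec_norm {C : Matrix n n ℝ} (hC : ∀ i j, 0 ≤ C i j) {μ : ℂ}
    {v : n → ℂ} (hv : C.map (algebraMap ℝ ℂ) *ᵥ v = μ • v) (i : n) :
    ‖μ‖ * ‖v i‖ ≤ (C *ᵥ fun j => ‖v j‖) i := calc
  ‖μ‖ * ‖v i‖ = ‖∑ j, (C i j : ℂ) * v j‖ := by
    rw [← norm_mul, ← smul_eq_mul, ← Pi.smul_apply μ v i, ← hv]
    rfl
  _ ≤ ∑ j, ‖(C i j : ℂ) * v j‖ := norm_sum_le _ _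
  _ = (C *ᵥ fun j => ‖v j‖) i := by
    simp only [norm_mul, Complex.norm_real, Real.norm_of_nonneg (hC _ _), mulVec, dotProduct]

variable [DecidableEq n]

section NormedRing

-- Any complete submultiplicative norm on matrices would do.
attribute [local instance] Matrix.linftyOpNormedAddCommGroup Matrix.linftyOpNormedRing
  Matrix.linftyOpNormedSpace

theorem one_sub_inv_nonneg {X : Matrix n n ℝ} (hX : ∀ i j, 0 ≤ X i j) (h : ‖X‖ < 1) :
    ∀ i j, 0 ≤ (1 - X)⁻¹ i j := by
  have hsum : Summable (X ^ ·) := summable_geometric_of_norm_lt_one h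
  rw [inv_eq_left_inv (geom_series_mul_neg X h)]
  intro i j
  exact (Pi.hasSum.mp (Pi.hasSum.mp hsum.hasSum i) j).nonneg fun k => pow_apply_nonneg hX k i j

theorem mul_one_sub_inv_nonneg {A X : Matrix n n ℝ} (hA : ∀ i j, 0 ≤ A⁻¹ i j)
    (hX : ∀ i j, 0 ≤ X i j) (h : ‖X‖ < 1) : ∀ i j, 0 ≤ (A * (1 - X))⁻¹ i j := by
  rw [mul_inv_rev]
  exact mul_apply_nonneg (one_sub_inv_nonneg hX h) hA

theorem smul_one_sub_inv_nonneg_of_norm_lt {C : Matrix n n ℝ} (hC : ∀ i j, 0 ≤ C i j) {t : ℝ}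
    (ht : ‖C‖ < t) : ∀ i j, 0 ≤ (t • 1 - C)⁻¹ i j := by
  have ht0 : 0 < t := (norm_nonneg C).trans_lt ht
  have hfactor : t • 1 - C = t • (1 : Matrix n n ℝ) * (1 - t⁻¹ • C) := by
    rw [smul_one_mul, smul_sub, smul_smul, mul_inv_cancel₀ ht0.ne', one_smul]
  have hinv : (t • (1 : Matrix n n ℝ))⁻¹ = t⁻¹ • 1 :=
    inv_eq_left_inv (by rw [smul_mul_smul, inv_mul_cancel₀ ht0.ne', one_mul, one_smul])
  rw [hfactor]
  refine mul_one_sub_inv_nonneg (fun i j => ?_) (fun i j => ?_) ?_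
  · rw [hinv, smul_apply, smul_eq_mul]
    exact mul_nonneg (inv_nonneg.mpr ht0.le) (zero_le_one_elem i j)
  · exact mul_nonneg (inv_nonneg.mpr ht0.le) (hC i j)
  · rw [norm_smul, norm_inv, Real.norm_of_nonneg ht0.le, inv_mul_lt_one₀ ht0]
    exact ht

theorem smul_one_sub_inv_nonneg_of_le {C : Matrix n n ℝ} {s t : ℝ}
    (hdet : (t • 1 - C).det ≠ 0) (hRt : ∀ i j, 0 ≤ (t • 1 - C)⁻¹ i j)
    (hst : s ≤ t) (hnorm : (t - s) * ‖(t • 1 - C)⁻¹‖ < 1) : ∀ i j, 0 ≤ (s • 1 - C)⁻¹ i j := by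
  have hfactor : s • 1 - C = (t • 1 - C) * (1 - (t - s) • (t • 1 - C)⁻¹) := by
    rw [mul_sub, mul_one, mul_smul_comm, mul_nonsing_inv _ (isUnit_iff_ne_zero.mpr hdet),
      sub_smul]
    abel
  rw [hfactor]
  refine mul_one_sub_inv_nonneg hRt (fun i j => ?_) ?_
  · exact mul_nonneg (sub_nonneg.mpr hst) (hRt i j)
  · rwa [norm_smul, Real.norm_of_nonneg (sub_nonneg.mpr hst)]

theorem smul_one_sub_inv_nonneg {C : Matrix n n ℝ} (hC : ∀ i j, 0 ≤ C i j) {a : ℝ}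
    (hdet : ∀ t, a ≤ t → (t • 1 - C).det ≠ 0) {s : ℝ} (hs : a ≤ s) :
    ∀ i j, 0 ≤ (s • 1 - C)⁻¹ i j := by
  set R : ℝ → Matrix n n ℝ := fun t => (t • 1 - C)⁻¹
  set T := max a (‖C‖ + 1)
  have hcont : ContinuousOn R (Set.Icc a T) := by
    intro t ht
    have hinv : ContinuousAt Ring.inverse (t • 1 - C).det := by
      simpa [Ring.inverse_eq_inv'] using continuousAt_inv₀ (hdet t ht.1)
    exact ((continuousAt_matrix_inv _ hinv).comp (f := fun t : ℝ => t • 1 - C)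
      (by fun_prop)).continuousWithinAt
  obtain ⟨B, hB⟩ := isCompact_Icc.exists_bound_of_continuousOn hcont
  set δ := (|B| + 1)⁻¹
  have hδ : 0 < δ := by positivity
  have hδB : δ * |B| < 1 := by
    rw [inv_mul_lt_one₀ (by positivity)]
    linarith
  have hsteps : ∀ k : ℕ, ∀ s, a ≤ s → T - k * δ ≤ s → ∀ i j, 0 ≤ R s i j := by
    intro k
    induction k with
    | zero =>
      intro s _ hTs
      refine smul_one_sub_inv_nonneg_of_norm_lt hC (lt_of_lt_of_le ?_ (by simpa using hTs))
      exact (lt_add_one _).trans_le (le_max_right _ _)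
    | succ k ih =>
      intro s has hks
      rcases le_or_gt (T - k * δ) s with h | h
      · exact ih s has h
      set t := T - k * δ
      have hat : a ≤ t := has.trans h.le
      refine smul_one_sub_inv_nonneg_of_le (hdet t hat) (ih t hat le_rfl) h.le ?_
      have htT : t ≤ T := sub_le_self _ (by positivity)
      calc (t - s) * ‖R t‖ ≤ δ * |B| := by
            gcongr
            · push_cast at hks; linarith
            · exact (hB t ⟨hat, htT⟩).trans (le_abs_self B)
        _ < 1 := hδB
  obtain ⟨k, hk⟩ := exists_nat_ge ((T - a) / δ)
  refine hsteps k s hs ?_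
  rw [div_le_iff₀ hδ] at hk
  linarith

end NormedRing

theorem eq_zero_of_le_mulVec {C : Matrix n n ℝ} (hdet : (1 - C).det ≠ 0)
    (hR : ∀ i j, 0 ≤ (1 - C)⁻¹ i j) {u : n → ℝ} (hu : 0 ≤ u) (h : u ≤ C *ᵥ u) : u = 0 := by
  have hu' : u = (1 - C)⁻¹ *ᵥ (u - C *ᵥ u) := by
    have hsub : u - C *ᵥ u = (1 - C) *ᵥ u := by rw [sub_mulVec, one_mulVec]
    rw [hsub, mulVec_mulVec, nonsing_inv_mul _ (isUnit_iff_ne_zero.mpr hdet), one_mulVec]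
  refine le_antisymm (fun i => ?_) hu
  rw [hu']
  exact Finset.sum_nonpos fun j _ => mul_nonpos_of_nonneg_of_nonpos (hR i j) (sub_nonpos.mpr (h j))

theorem norm_lt_one_of_mem_spectrum {C : Matrix n n ℝ} (hC : ∀ i j, 0 ≤ C i j)
    (hdet : (1 - C).det ≠ 0) (hR : ∀ i j, 0 ≤ (1 - C)⁻¹ i j) {μ : ℂ}
    (hμ : μ ∈ spectrum ℂ (C.map (algebraMap ℝ ℂ))) : ‖μ‖ < 1 := by
  rw [spectrum.mem_iff, Algebra.algebraMap_eq_smul_one, isUnit_iff_isUnit_det,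
    isUnit_iff_ne_zero, not_not, ← exists_mulVec_eq_zero_iff] at hμ
  obtain ⟨v, hv0, hv⟩ := hμ
  rw [sub_mulVec, smul_mulVec, one_mulVec, sub_eq_zero] at hv
  by_contra! hμ1
  have hle : (fun j => ‖v j‖) ≤ C *ᵥ fun j => ‖v j‖ := fun i =>
    le_mul_of_one_le_left (norm_nonneg _) hμ1 |>.trans (norm_mul_norm_le_mulVec_norm hC hv.symm i)
  have hzero := eq_zero_of_le_mulVec hdet hR (fun j => norm_nonneg (v j)) hle
  exact hv0 (funext fun j => norm_eq_zero.mp (congrFun hzero j))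

theorem det_smul_one_sub_eq_eval_charpoly_sub_one {R : Type*} [CommRing R] (C : Matrix n n R)
    (t : R) : (t • 1 - C).det = (C - 1).charpoly.eval (t - 1) := by
  rw [eval_charpoly, scalar_apply, ← smul_one_eq_diagonal, sub_smul, one_smul]
  abel_nf

theorem add_one_mem_spectrum_of_mem_rootSet_charpoly_sub_one {K L : Type*} [Field K] [Field L]
    [Algebra K L] {C : Matrix n n K} {z : L} (hz : z ∈ (C - 1).charpoly.rootSet L) :
    z + 1 ∈ spectrum L (C.map (algebraMap K L)) := by
  have hroot : ((C.map (algebraMap K L) - 1).charpoly).IsRoot z := by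
    rw [mem_rootSet', aeval_def, eval₂_eq_eval_map] at hz
    rw [← Matrix.map_one (algebraMap K L) (map_zero _) (map_one _),
      ← Matrix.map_sub _ (map_sub _), charpoly_map]
    exact hz.2
  rw [← mem_spectrum_iff_isRoot_charpoly, ← spectrum.add_mem_add_iff (s := 1),
    Algebra.algebraMap_eq_smul_one, one_smul, add_sub_cancel] at hroot
  exact hroot

end Matrix

open Matrix Polynomial in
/-- For a nonnegative matrix `C`, the spectral radius of `C` is `< 1` iff all the
coefficients `c_0, …, c_{D-1}` of the (monic, degree `D`) characteristic polynomial
`det(s I − (C − 1))` of `C − I` are strictly positive. -/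
theorem spectral_radius_lt_one_iff_charpoly_coeffs_pos
    (D : ℕ) (C : Matrix (Fin D) (Fin D) ℝ) (hC : ∀ i j, 0 ≤ C i j) :
    SpectralRadiusLtOne C ↔
      ∀ k : ℕ, k < D → 0 < ((C - 1).charpoly).coeff k := by
  have hmonic : (C - 1).charpoly.Monic := charpoly_monic _
  have hdeg : (C - 1).charpoly.natDegree = D := by simp [charpoly_natDegree_eq_dim]
  constructor
  · intro h k hk
    refine coeff_pos_of_rootSet_subset_re_neg (by simp [hmonic.leadingCoeff]) (fun z hz => ?_)
      (by omega)
    show z.re < 0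
    have hz1 : ‖z + 1‖ < 1 := h _ (add_one_mem_spectrum_of_mem_rootSet_charpoly_sub_one hz)
    have hre : (z + 1).re ≤ ‖z + 1‖ := Complex.re_le_norm _
    rw [Complex.add_re, Complex.one_re] at hre
    linarith
  · intro h μ hμ
    have hcoeff : ∀ k ≤ (C - 1).charpoly.natDegree, 0 < (C - 1).charpoly.coeff k := fun k hk =>
      (hk.lt_or_eq).elim (fun hk => h k (hdeg ▸ hk)) fun hk => by
        rw [hk, hmonic.coeff_natDegree]
        exact one_pos
    have hdet : ∀ t : ℝ, 1 ≤ t → (t • 1 - C).det ≠ 0 := fun t ht => by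
      rw [det_smul_one_sub_eq_eval_charpoly_sub_one]
      exact (eval_pos_of_coeff_pos hcoeff (sub_nonneg.mpr ht)).ne'
    exact norm_lt_one_of_mem_spectrum hC (by simpa using hdet 1 le_rfl)
      (by simpa using smul_one_sub_inv_nonneg hC hdet le_rfl) hμ
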